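/- Let r ≥ 1, u ∈ ℤ and k₁, …, k_r ≥ 1, and let α = δᵘ·a₁^{k₁}·a₂^{k₂}·⋯·a_r^{k_r} (indices mod 3; the corresponding letter list is a nondecreasing word with syllable number r, so this is the Garside normal form of α). Suppose π(α) is a 3-cycle, α is a summit element with summit exponent u, and every conjugate β of α that is a summit element has normal form β = δᵘ·∏w′ with the nondecreasing word w′ of syllable number ≥ r. Then (i) u + r ≡ 0 (mod 3), and (ii) k_i is even for some 1 ≤ i ≤ r. -/

import Mathlib

/-!
Cycle the last block `a_r^{k_r}` of `α` to the front; conjugation past `δ^u` turns it into a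
power of `a_{r+u}`. If `r + u ≡ 1 (mod 3)` it merges with the first block `a₁^{k₁}`, giving a
summit conjugate with `r - 1` syllables (when `r = 1`, instead `3 ∣ u`, `k₁` is even and
`π(α) = 1`). If `r + u ≡ 2`, cycling one letter creates `a₂ a₁ = δ`, raising the summit
exponent. So `r + u ≡ 0`.

Since `π(δ)` and 3-cycles are even and each `π(a_i)` is odd, `∑ k_i` is even. If all `k_i`
were odd, `r` would be even, and as `π(a_i a_{i+1}) = π(δ)⁻¹` we would get
`π(α) = π(δ)^{u - r/2} = 1`.
-/

namespace Braid

/-- Relations of the dual (band-generator) presentation of the 3-braid group: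
`a (i+1) * a i = a (i+2) * a (i+1)` for all `i : ZMod 3`. -/
def braidRels : Set (FreeGroup (ZMod 3)) :=
  { r | ∃ i : ZMod 3,
      r = FreeGroup.of (i + 1) * FreeGroup.of i *
          (FreeGroup.of (i + 2) * FreeGroup.of (i + 1))⁻¹ }

/-- The 3-braid group with the band-generator presentation. -/
abbrev B3 := PresentedGroup braidRels

/-- The band generators `a i`, `i : ZMod 3`. -/
def a (i : ZMod 3) : B3 := PresentedGroup.of i

/-- The fundamental element `δ = a₂ * a₁`. -/
def δ : B3 := a 2 * a 1

/-- The submonoid of positive braids. -/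
def Pos : Submonoid B3 := Submonoid.closure (Set.range a)

/-- The exponent-sum homomorphism, sending each generator to `1 : ℤ`. -/
def eHom : B3 →* Multiplicative ℤ :=
  PresentedGroup.toGroup (f := fun _ => Multiplicative.ofAdd (1 : ℤ)) (by
    rintro r ⟨i, rfl⟩
    simp only [map_mul, map_inv, FreeGroup.lift_apply_of]
    group)

/-- The exponent sum (letter length on positive braids) as an integer. -/
def elen (x : B3) : ℤ := Multiplicative.toAdd (eHom x)

/-- The right complement `X* = X⁻¹ * δ^{e(X)}`. -/
def rc (X : B3) : B3 := X⁻¹ * δ ^ elen X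

/-- The `n`-th power of the rotation automorphism `τ`: `τ^n (x) = δ^{-n} * x * δ^n`. -/
def tauPow (n : ℤ) (x : B3) : B3 := δ ^ (-n) * x * δ ^ n

/-- The positive braid represented by a list of generator indices. -/
def wordProd (l : List (ZMod 3)) : B3 := (l.map a).prod

/-- A word is nondecreasing if each letter index is the previous one or the previous one
plus `1` (mod 3). -/
def NDWord (l : List (ZMod 3)) : Prop :=
  l.Chain' (fun x y => y = x ∨ y = x + 1)

/-- The syllable number of a word: the number of maximal constant blocks. -/
def syl : List (ZMod 3) → ℕ
  | [] => 0
  | [_] => 1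
  | x :: y :: t => (if x = y then 0 else 1) + syl (y :: t)

/-- The permutations underlying the band generators. -/
def perm3 (i : ZMod 3) : Equiv.Perm (Fin 3) :=
  if i = 0 then Equiv.swap 0 2 else if i = 1 then Equiv.swap 0 1 else Equiv.swap 1 2

lemma perm3_rel : ∀ i : ZMod 3,
    perm3 (i + 1) * perm3 i * (perm3 (i + 2) * perm3 (i + 1))⁻¹ = 1 := by decide

/-- The homomorphism to the symmetric group on 3 letters (underlying permutation). -/
def permOf : B3 →* Equiv.Perm (Fin 3) :=
  PresentedGroup.toGroup (f := perm3) (by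
    rintro r ⟨i, rfl⟩
    simp only [map_mul, map_inv, FreeGroup.lift_apply_of]
    exact perm3_rel i)

/-- The set of band generators and their inverses. -/
def genSet : Set B3 := Set.range a ∪ Set.range (fun i => (a i)⁻¹)

/-- The band-generator word length of a 3-braid. -/
noncomputable def wordLen (x : B3) : ℕ :=
  sInf { n | ∃ s : List B3, s.length = n ∧ (∀ g ∈ s, g ∈ genSet) ∧ s.prod = x }

/-- The minimal band-generator word length in the conjugacy class. -/
noncomputable def minConjLen (x : B3) : ℕ :=
  sInf { n | ∃ y, IsConj x y ∧ wordLen y = n }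

/-- `α` is a summit element with summit exponent `u` if `δ^{-u} * α` is positive and `u` is
the maximal such exponent over the conjugacy class. -/
def IsSummit (α : B3) (u : ℤ) : Prop :=
  δ ^ (-u) * α ∈ Pos ∧ ∀ β : B3, IsConj α β → ∀ v : ℤ, δ ^ (-v) * β ∈ Pos → v ≤ u

lemma a_succ_mul_a_eq (i : ZMod 3) : a (i + 1) * a i = a (i + 2) * a (i + 1) :=
  mul_inv_eq_one.mp (PresentedGroup.one_of_mem ⟨i, rfl⟩)

lemma a_succ_mul_a (i : ZMod 3) : a (i + 1) * a i = δ := by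
  have h := a_succ_mul_a_eq
  fin_cases i
  · exact h 0
  · rfl
  · exact (h 2).trans (h 0)

lemma a_mul_delta (i : ZMod 3) : a i * δ = δ * a (i + 1) := by
  have h : a i * a (i + 2) = δ := by
    simpa [add_assoc, show (2 + 1 : ZMod 3) = 0 from rfl] using a_succ_mul_a (i + 2)
  have hδ : a (i + 2) * a (i + 1) = δ := by
    simpa [add_assoc, show (1 + 1 : ZMod 3) = 2 from rfl] using a_succ_mul_a (i + 1)
  calc a i * δ = a i * a (i + 2) * a (i + 1) := by rw [mul_assoc, hδ]
    _ = δ * a (i + 1) := by rw [h]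

lemma a_mul_delta_zpow (v : ℤ) (i : ZMod 3) : a i * δ ^ v = δ ^ v * a (i + v) := by
  induction v using Int.induction_on generalizing i with
  | zero => simp
  | succ v ih =>
    rw [zpow_add_one, ← mul_assoc, ih, mul_assoc, a_mul_delta, ← mul_assoc]
    push_cast; ring_nf
  | pred v ih =>
    apply mul_right_cancel (b := δ)
    rw [mul_assoc, ← zpow_add_one, sub_add_cancel, ih, mul_assoc, a_mul_delta, ← mul_assoc,
      ← zpow_add_one, sub_add_cancel]
    push_cast; ring_nf

lemma a_pow_mul_delta_zpow (v : ℤ) (i : ZMod 3) (m : ℕ) :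
    a i ^ m * δ ^ v = δ ^ v * a (i + v) ^ m :=
  (SemiconjBy.pow_right (a_mul_delta_zpow v i).symm m).symm

lemma a_mem_Pos (i : ZMod 3) : a i ∈ Pos := Submonoid.subset_closure ⟨i, rfl⟩

lemma wordProd_mem_Pos (l : List (ZMod 3)) : wordProd l ∈ Pos :=
  Submonoid.list_prod_mem _ fun _ hx => by
    obtain ⟨i, -, rfl⟩ := List.mem_map.mp hx
    exact a_mem_Pos i

@[simp] lemma wordProd_nil : wordProd [] = 1 := rfl

@[simp] lemma wordProd_cons (i : ZMod 3) (l : List (ZMod 3)) :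
    wordProd (i :: l) = a i * wordProd l := rfl

@[simp] lemma wordProd_append (l₁ l₂ : List (ZMod 3)) :
    wordProd (l₁ ++ l₂) = wordProd l₁ * wordProd l₂ := by
  simp [wordProd]

@[simp] lemma wordProd_replicate (m : ℕ) (i : ZMod 3) :
    wordProd (List.replicate m i) = a i ^ m := by
  simp [wordProd]

lemma isConj_cycle (u : ℤ) (x : B3) (i : ZMod 3) (m : ℕ) :
    IsConj (δ ^ u * (x * a i ^ m)) (δ ^ u * (a (i + u) ^ m * x)) :=
  isConj_iff.mpr ⟨a i ^ m, by
    rw [mul_inv_eq_iff_eq_mul, ← mul_assoc, a_pow_mul_delta_zpow]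
    simp only [mul_assoc]⟩

lemma IsSummit.of_isConj {α : B3} {u : ℤ} (hs : IsSummit α u) {w : List (ZMod 3)}
    (h : IsConj α (δ ^ u * wordProd w)) : IsSummit (δ ^ u * wordProd w) u :=
  ⟨by rw [zpow_neg, inv_mul_cancel_left]; exact wordProd_mem_Pos w,
    fun γ hγ => hs.2 γ (h.trans hγ)⟩

lemma IsSummit.add_intCast_ne_succ {u : ℤ} {i j : ZMod 3} {y : B3}
    (hs : IsSummit (δ ^ u * (a j * y * a i)) u) (hy : y ∈ Pos) : i + u ≠ j + 1 := by
  intro h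
  have hconj : IsConj (δ ^ u * (a j * y * a i)) (δ ^ (u + 1) * y) := by
    refine isConj_iff.mpr ⟨a i, ?_⟩
    calc a i * (δ ^ u * (a j * y * a i)) * (a i)⁻¹ = a i * δ ^ u * a j * y := by group
      _ = δ ^ (u + 1) * y := by
        rw [a_mul_delta_zpow, h, mul_assoc (δ ^ u), a_succ_mul_a, zpow_add_one]
  have := hs.2 _ hconj (u + 1) (by rw [zpow_neg, inv_mul_cancel_left]; exact hy)
  omega

lemma permOf_a (i : ZMod 3) : permOf (a i) = perm3 i := PresentedGroup.toGroup.of _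

lemma permOf_delta : permOf δ = perm3 2 * perm3 1 := by
  rw [δ, map_mul, permOf_a, permOf_a]

lemma permOf_wordProd (l : List (ZMod 3)) : permOf (wordProd l) = (l.map perm3).prod := by
  simp [wordProd, map_list_prod, Function.comp_def, permOf_a]

lemma sign_permOf_delta_zpow_mul_wordProd (u : ℤ) (l : List (ZMod 3)) :
    Equiv.Perm.sign (permOf (δ ^ u * wordProd l)) = (-1) ^ l.length := by
  have hδ : Equiv.Perm.sign (permOf δ) = 1 := by rw [permOf_delta]; decide
  have hsign : ∀ i, Equiv.Perm.sign (perm3 i) = -1 := by decide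
  simp [permOf_wordProd, map_list_prod, hδ, Function.comp_def, hsign]

lemma even_length_of_isThreeCycle {u : ℤ} {l : List (ZMod 3)}
    (h : (permOf (δ ^ u * wordProd l)).IsThreeCycle) : Even l.length := by
  have := h.sign
  rwa [sign_permOf_delta_zpow_mul_wordProd, neg_one_pow_eq_one_iff_even (by decide)] at this

lemma permOf_delta_zpow_eq_one {u : ℤ} (hu : 3 ∣ u) : permOf δ ^ u = 1 := by
  obtain ⟨s, rfl⟩ := hu
  rw [zpow_mul, show permOf δ ^ (3 : ℤ) = 1 by rw [permOf_delta]; decide, one_zpow]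

lemma perm3_pow_of_odd (i : ZMod 3) {m : ℕ} (hm : Odd m) : perm3 i ^ m = perm3 i := by
  obtain ⟨t, rfl⟩ := hm
  rw [pow_succ, pow_mul, show perm3 i ^ 2 = 1 by revert i; decide, one_pow, one_mul]

lemma perm3_pow_of_even (i : ZMod 3) {m : ℕ} (hm : Even m) : perm3 i ^ m = 1 := by
  obtain ⟨t, rfl⟩ := hm
  rw [← two_mul, pow_mul, show perm3 i ^ 2 = 1 by revert i; decide, one_pow]

lemma perm3_mul_perm3_add_one (i : ZMod 3) : perm3 i * perm3 (i + 1) = (permOf δ)⁻¹ := by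
  rw [permOf_delta]; revert i; decide

def blockWord : ZMod 3 → List ℕ → List (ZMod 3)
  | _, [] => []
  | c, m :: ms => List.replicate m c ++ blockWord (c + 1) ms

@[simp] lemma blockWord_nil (c : ZMod 3) : blockWord c [] = [] := rfl

@[simp] lemma blockWord_cons (c : ZMod 3) (m : ℕ) (ms : List ℕ) :
    blockWord c (m :: ms) = List.replicate m c ++ blockWord (c + 1) ms := rfl

@[simp] lemma length_blockWord (c : ZMod 3) (ms : List ℕ) :
    (blockWord c ms).length = ms.sum := by
  induction ms generalizing c <;> simp [*]

lemma blockWord_append (c : ZMod 3) (l₁ l₂ : List ℕ) :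
    blockWord c (l₁ ++ l₂) = blockWord c l₁ ++ blockWord (c + l₁.length) l₂ := by
  induction l₁ generalizing c with
  | nil => simp
  | cons m l ih => simp [ih, add_assoc, add_comm (1 : ZMod 3)]

lemma wordProd_blockWord_append_singleton (c : ZMod 3) (ms : List ℕ) (m : ℕ) :
    wordProd (blockWord c (ms ++ [m])) = wordProd (blockWord c ms) * a (c + ms.length) ^ m := by
  simp [blockWord_append]

lemma a_pow_mul_wordProd_blockWord_cons (c : ZMod 3) (m k : ℕ) (ms : List ℕ) :
    a c ^ m * wordProd (blockWord c (k :: ms)) = wordProd (blockWord c ((m + k) :: ms)) := by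
  simp [pow_add, mul_assoc]

lemma wordProd_blockWord_ofFn (c : ZMod 3) {q : ℕ} (m : Fin q → ℕ) :
    wordProd (blockWord c (List.ofFn m)) =
      (List.ofFn fun j : Fin q => a ((j : ℕ) + c) ^ m j).prod := by
  induction q generalizing c with
  | zero => simp
  | succ q ih =>
    simp only [List.ofFn_succ, blockWord_cons, wordProd_append, wordProd_replicate, ih,
      List.prod_cons, Fin.val_zero, Fin.val_succ]
    push_cast
    simp only [zero_add, add_assoc, add_comm (1 : ZMod 3)]

lemma head?_blockWord {c : ZMod 3} {ms : List ℕ} (hms : ∀ m ∈ ms, m ≠ 0) :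
    ∀ x ∈ (blockWord c ms).head?, x = c := by
  cases ms with
  | nil => simp
  | cons m ms => simp [List.head?_replicate, hms m (by simp)]

lemma nDWord_blockWord (c : ZMod 3) {ms : List ℕ} (hms : ∀ m ∈ ms, m ≠ 0) :
    NDWord (blockWord c ms) := by
  induction ms generalizing c with
  | nil => exact List.isChain_nil
  | cons m ms ih =>
    refine List.isChain_append.mpr ⟨List.isChain_replicate_of_rel _ (Or.inl rfl),
      ih (c + 1) fun k hk => hms k (by simp [hk]), fun x hx y hy => ?_⟩
    rw [List.getLast?_replicate, if_neg (hms m (by simp))] at hx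
    obtain rfl : c = x := Option.mem_some_iff.mp hx
    exact Or.inr (head?_blockWord (fun k hk => hms k (by simp [hk])) y hy)

lemma syl_replicate_append {c : ZMod 3} {m : ℕ} (hm : m ≠ 0) {l : List (ZMod 3)}
    (hl : ∀ x ∈ l.head?, x ≠ c) : syl (List.replicate m c ++ l) = syl l + 1 := by
  induction m with
  | zero => exact absurd rfl hm
  | succ m ih =>
    rcases m with _ | m
    · rcases l with _ | ⟨x, l⟩
      · rfl
      · simp only [zero_add, List.replicate_one, List.cons_append, List.nil_append, syl,
          Ne.symm (hl x rfl), ↓reduceIte]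
        omega
    · rw [List.replicate_succ, List.cons_append, ← ih (by omega), List.replicate_succ,
        List.cons_append]
      simp [syl]

lemma syl_blockWord (c : ZMod 3) {ms : List ℕ} (hms : ∀ m ∈ ms, m ≠ 0) :
    syl (blockWord c ms) = ms.length := by
  induction ms generalizing c with
  | nil => rfl
  | cons m ms ih =>
    have hms' : ∀ k ∈ ms, k ≠ 0 := fun k hk => hms k (by simp [hk])
    rw [blockWord_cons, syl_replicate_append (hms m (by simp)), ih _ hms', List.length_cons]
    intro x hx
    rw [head?_blockWord hms' x hx]
    exact (by decide : ∀ c : ZMod 3, c + 1 ≠ c) c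

lemma permOf_delta_zpow_mul_a_pow_eq_one {u : ℤ} (hu : 3 ∣ u) (i : ZMod 3) {m : ℕ}
    (hm : Even m) : permOf (δ ^ u * a i ^ m) = 1 := by
  rw [map_mul, map_zpow, map_pow, permOf_delta_zpow_eq_one hu, permOf_a, perm3_pow_of_even i hm,
    one_mul]

lemma permOf_wordProd_blockWord_of_odd (c : ZMod 3) (t : ℕ) {ms : List ℕ}
    (hms : ∀ m ∈ ms, Odd m) (hlen : ms.length = 2 * t) :
    permOf (wordProd (blockWord c ms)) = (permOf δ)⁻¹ ^ t := by
  induction t generalizing c ms with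
  | zero => simp_all
  | succ t ih =>
    obtain _ | ⟨m₁, _ | ⟨m₂, ms⟩⟩ := ms
    all_goals simp only [List.length_cons, List.length_nil] at hlen
    any_goals omega
    simp only [blockWord_cons, wordProd_append, wordProd_replicate, map_mul, map_pow, permOf_a,
      perm3_pow_of_odd _ (hms m₁ (by simp)), perm3_pow_of_odd _ (hms m₂ (by simp))]
    rw [ih _ (fun m hm => hms m (by simp [hm])) (by omega), ← mul_assoc, perm3_mul_perm3_add_one,
      pow_succ']

lemma even_sum_iff_even_length_of_odd {ms : List ℕ} (hms : ∀ m ∈ ms, Odd m) :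
    Even ms.sum ↔ Even ms.length := by
  induction ms with
  | nil => simp
  | cons m ms ih =>
    simp only [List.sum_cons, List.length_cons, Nat.even_add, Nat.even_add_one,
      ih fun k hk => hms k (by simp [hk]), Nat.not_even_iff_odd.mpr (hms m (by simp)), false_iff]

lemma _root_.List.exists_eq_cons_append_singleton {α : Type*} {l : List α}
    (hl : 2 ≤ l.length) : ∃ x l' y, l = x :: (l' ++ [y]) := by
  match l, hl with
  | x :: y :: t, _ => exact ⟨x, (y :: t).dropLast, (y :: t).getLast (List.cons_ne_nil _ _),
    by rw [List.dropLast_append_getLast]⟩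

lemma exists_wordProd_blockWord_eq_a_mul_mul_a (c : ZMod 3) {ms : List ℕ} {m : ℕ}
    (hms : ∀ k ∈ ms ++ [m], k ≠ 0) (h2 : 2 ≤ (ms ++ [m]).sum) :
    ∃ y ∈ Pos, wordProd (blockWord c (ms ++ [m])) = a c * y * a (c + ms.length) := by
  obtain ⟨x, l, z, hw⟩ :=
    List.exists_eq_cons_append_singleton (l := blockWord c (ms ++ [m])) (by simpa using h2)
  have hx : x = c := head?_blockWord hms x (by simp [hw])
  have hz : z = c + ms.length := by
    have hz : z ∈ (blockWord c (ms ++ [m])).getLast? := by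
      rw [hw, ← List.cons_append, List.getLast?_concat]; rfl
    simpa [blockWord_append, List.getLast?_replicate, hms m (by simp), eq_comm] using hz
  exact ⟨wordProd l, wordProd_mem_Pos l, by simp [hw, hx, hz, mul_assoc]⟩

lemma isConj_cycle_merge {c : ZMod 3} {u : ℤ} {ms : List ℕ}
    (h : c + ((ms.length + 1 : ℕ) : ZMod 3) + u = c) (k m : ℕ) :
    IsConj (δ ^ u * wordProd (blockWord c (k :: ms ++ [m])))
      (δ ^ u * wordProd (blockWord c ((m + k) :: ms))) := by
  have := isConj_cycle u (wordProd (blockWord c (k :: ms))) (c + (ms.length + 1 : ℕ)) m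
  rwa [h, a_pow_mul_wordProd_blockWord_cons, ← List.length_cons,
    ← wordProd_blockWord_append_singleton] at this

theorem three_dvd_add_length {u : ℤ} {ks : List ℕ} (hks : ∀ m ∈ ks, m ≠ 0)
    (hne : ks ≠ []) {α : B3} (hα : α = δ ^ u * wordProd (blockWord 1 ks))
    (h3 : (permOf α).IsThreeCycle) (hs : IsSummit α u)
    (hmin : ∀ (β : B3) (w' : List (ZMod 3)), IsConj α β → IsSummit β u → NDWord w' →
      β = δ ^ u * wordProd w' → ks.length ≤ syl w') :
    3 ∣ u + ks.length := by
  subst hα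
  obtain ⟨ks₀, kl, rfl⟩ : ∃ ks₀ kl, ks = ks₀ ++ [kl] :=
    ⟨_, _, (List.dropLast_append_getLast hne).symm⟩
  have hkl : kl ≠ 0 := hks kl (by simp)
  have hsum : Even (ks₀ ++ [kl]).sum := by simpa using even_length_of_isThreeCycle h3
  -- `1 + ks₀.length + u` indexes the last letter after it is cycled past `δ ^ u`
  rcases (by decide : ∀ M : ZMod 3, M = 0 ∨ M = 1 ∨ M = 2) (1 + ks₀.length + u) with
    h0 | h1 | h2
  · refine (ZMod.intCast_zmod_eq_zero_iff_dvd _ 3).mp ?_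
    push_cast [List.length_append, List.length_singleton]
    linear_combination h0
  · exfalso
    rcases ks₀ with _ | ⟨k₀, ks₀⟩
    · have hu : 3 ∣ u := (ZMod.intCast_zmod_eq_zero_iff_dvd _ 3).mp (by simpa using h1)
      have hkl_even : Even kl := by simpa using hsum
      exact h3.ne_one (by simpa using permOf_delta_zpow_mul_a_pow_eq_one hu 1 hkl_even)
    · have hks' : ∀ m ∈ (kl + k₀) :: ks₀, m ≠ 0 := by
        intro m hm
        rcases List.mem_cons.mp hm with rfl | hm
        · omega
        · exact hks m (by simp [hm])
      have hconj := isConj_cycle_merge (by simpa using h1) k₀ kl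
      have hsyl := hmin _ _ hconj (hs.of_isConj hconj) (nDWord_blockWord 1 hks') rfl
      rw [syl_blockWord 1 hks'] at hsyl
      simp at hsyl
  · obtain ⟨y, hy, hw⟩ := exists_wordProd_blockWord_eq_a_mul_mul_a 1 hks (by
      obtain ⟨t, ht⟩ := hsum
      have : kl ≤ (ks₀ ++ [kl]).sum := by simp
      omega)
    rw [hw] at hs
    exact absurd (by rw [h2]; rfl) (hs.add_intCast_ne_succ hy)

theorem exists_even_of_three_dvd {u : ℤ} {ks : List ℕ} {α : B3}
    (hα : α = δ ^ u * wordProd (blockWord 1 ks)) (h3 : (permOf α).IsThreeCycle)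
    (hdvd : 3 ∣ u + ks.length) : ∃ m ∈ ks, Even m := by
  subst hα
  by_contra! hodd
  replace hodd : ∀ m ∈ ks, Odd m := fun m hm => Nat.not_even_iff_odd.mp (hodd m hm)
  have hlen := even_length_of_isThreeCycle h3
  rw [length_blockWord, even_sum_iff_even_length_of_odd hodd] at hlen
  obtain ⟨t, ht⟩ := hlen
  apply h3.ne_one
  rw [map_mul, map_zpow, permOf_wordProd_blockWord_of_odd 1 t hodd (by omega), inv_pow,
    ← zpow_natCast, ← zpow_neg, ← zpow_add]
  exact permOf_delta_zpow_eq_one (by omega)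

/-- Lemma 3.2: if `α = δ^u a₁^{k₁} ⋯ a_r^{k_r}` (normal form) closes to a knot, is a summit
element, and has minimal syllable number among its summit conjugates, then `u + r ≡ 0 (mod 3)`
and some `k_i` is even. -/
theorem summit_knot_syllables (r : ℕ) (hr : 1 ≤ r) (u : ℤ) (k : Fin r → ℕ)
    (hk : ∀ j, 1 ≤ k j) (α : B3)
    (hα : α = δ ^ u *
      (List.ofFn (fun j : Fin r => (a (((j : ℕ) : ZMod 3) + 1)) ^ (k j))).prod)
    (h3 : (permOf α).IsThreeCycle)
    (hs : IsSummit α u)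
    (hmin : ∀ (β : B3) (w' : List (ZMod 3)), IsConj α β → IsSummit β u → NDWord w' →
        β = δ ^ u * wordProd w' → r ≤ syl w') :
    (u + (r : ℤ)) % 3 = 0 ∧ ∃ j : Fin r, Even (k j) := by
  rw [← wordProd_blockWord_ofFn] at hα
  have hlen : (List.ofFn k).length = r := List.length_ofFn
  have hks : ∀ m ∈ List.ofFn k, m ≠ 0 := by
    simp only [List.mem_ofFn, forall_exists_index]
    rintro _ j rfl
    exact Nat.one_le_iff_ne_zero.mp (hk j)
  have hne : List.ofFn k ≠ [] := by
    simp only [ne_eq, List.ofFn_eq_nil_iff]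
    omega
  have hdvd := three_dvd_add_length hks hne hα h3 hs fun β w' h₁ h₂ h₃ h₄ => by
    rw [hlen]; exact hmin β w' h₁ h₂ h₃ h₄
  obtain ⟨_, hm, heven⟩ := exists_even_of_three_dvd hα h3 hdvd
  obtain ⟨j, rfl⟩ := List.mem_ofFn.mp hm
  rw [hlen] at hdvd
  exact ⟨Int.emod_eq_zero_of_dvd hdvd, j, heven⟩
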